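/- arXiv:1208.4368 — 2 statements merged into one kernel-verified Lean document; each statement's English description precedes it below -/
import Mathlib

section
/- The quadratic root formula P = (1/2)·(√(N_Δ² + 2N_Δ/λ) − N_Σ) with N_Δ = σ_W² − σ_M² > 0 and N_Σ = σ_W² + σ_M² satisfies P > 0 if and only if 1/σ_M² − 1/σ_W² > 2λ. -/
/-! Since `σW + σM ≥ 0`, the root is positive iff `(σW + σM)² < (σW - σM)² + 2(σW - σM)/λ`.
The two squares differ by `4 σM σW`, so this says `2 λ σM σW < σW - σM`, i.e.
`2 λ < (σW - σM)/(σM σW) = 1/σM - 1/σW`. -/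

lemma sq_add_lt_sq_sub_add_div_iff {a b lam : ℝ} (hab : 0 < a * b) (hlam : 0 < lam) :
    (b + a) ^ 2 < (b - a) ^ 2 + 2 * (b - a) / lam ↔ 2 * lam < 1 / a - 1 / b := by
  have ha : a ≠ 0 := left_ne_zero_of_mul hab.ne'
  have hb : b ≠ 0 := right_ne_zero_of_mul hab.ne'
  calc (b + a) ^ 2 < (b - a) ^ 2 + 2 * (b - a) / lam
      ↔ 4 * (a * b) < 2 * (b - a) / lam := by
        rw [show (b + a) ^ 2 = (b - a) ^ 2 + 4 * (a * b) by ring, add_lt_add_iff_left]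
    _ ↔ 2 * lam * (a * b) < b - a := by
        rw [lt_div_iff₀ hlam]
        constructor <;> intro <;> linarith
    _ ↔ 2 * lam < (b - a) / (a * b) := (lt_div_iff₀ hab).symm
    _ ↔ 2 * lam < 1 / a - 1 / b := by rw [one_div, one_div, inv_sub_inv ha hb]

theorem secrecy_root_pos_iff (σM σW lam : ℝ) (hM : 0 < σM) (h : σM < σW) (hlam : 0 < lam) :
    0 < (1/2) * (Real.sqrt ((σW - σM)^2 + 2 * (σW - σM) / lam) - (σW + σM)) ↔
    1/σM - 1/σW > 2 * lam := by
  have hW : 0 < σW := hM.trans h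
  rw [mul_pos_iff_of_pos_left one_half_pos, sub_pos, Real.lt_sqrt (by positivity), gt_iff_lt]
  exact sq_add_lt_sq_sub_add_div_iff (mul_pos hM hW) hlam
end

section
/- KKT characterization: for the problem of maximizing Σᵢ f_i(Pᵢ) subject to Σᵢ Pᵢ ≤ P and Pᵢ ≥ 0, where f_i(P) = (1/2)·log(1 + P/σ_{Mi}²) − (1/2)·log(1 + P/σ_{Wi}²) with σ_{Wi}² > σ_{Mi}² > 0, a feasible point (P₁,…,P_N) with Σᵢ Pᵢ = P is optimal if there exists λ > 0 such that for each i: f_i′(Pᵢ) = λ if Pᵢ > 0, and f_i′(0) ≤ λ if Pᵢ = 0. -/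
/-!
Each secrecy rate `f_i` is concave on `[0, ∞)`, so it lies below its tangent line at `P_i`.
The KKT conditions turn that tangent line into `f_i(Q_i) ≤ f_i(P_i) + λ (Q_i - P_i)` for every
feasible `Q_i ≥ 0` (when `P_i = 0` this uses `f_i'(0) ≤ λ` and `Q_i ≥ 0`). Summing over `i`, the
error term `λ (∑ Q_i - ∑ P_i)` is nonpositive because `λ ≥ 0` and `∑ Q_i ≤ P = ∑ P_i`.
-/

open Real Set

lemma ConcaveOn.le_add_deriv_mul_sub {S : Set ℝ} {f : ℝ → ℝ} {x y : ℝ} (hf : ConcaveOn ℝ S f)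
    (hx : x ∈ S) (hy : y ∈ S) (hfd : DifferentiableAt ℝ f x) :
    f y ≤ f x + deriv f x * (y - x) := by
  rcases lt_trichotomy x y with hxy | rfl | hyx
  · have hslope := hf.slope_le_deriv hx hy hxy hfd
    rw [slope_def_field, div_le_iff₀ (sub_pos.mpr hxy)] at hslope
    linarith
  · simp
  · have hslope := hf.deriv_le_slope hy hx hyx hfd
    rw [slope_def_field, le_div_iff₀ (sub_pos.mpr hyx)] at hslope
    linarith

lemma ConcaveOn.le_add_mul_sub_of_kkt {f : ℝ → ℝ} {p q lam : ℝ} (hf : ConcaveOn ℝ (Ici 0) f)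
    (hfd : DifferentiableAt ℝ f p) (hp : 0 ≤ p) (hq : 0 ≤ q)
    (hkkt : (0 < p → deriv f p = lam) ∧ (p = 0 → deriv f 0 ≤ lam)) :
    f q ≤ f p + lam * (q - p) := by
  have htangent := hf.le_add_deriv_mul_sub hp hq hfd
  rcases hp.eq_or_lt with rfl | hpos
  · nlinarith [hkkt.2 rfl]
  · rwa [hkkt.1 hpos] at htangent

theorem sum_le_sum_of_kkt {ι : Type*} [Fintype ι] {f : ι → ℝ → ℝ} {P Q : ι → ℝ} {lam : ℝ}
    (hf : ∀ i, ConcaveOn ℝ (Ici 0) (f i)) (hfd : ∀ i, DifferentiableAt ℝ (f i) (P i))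
    (hP : ∀ i, 0 ≤ P i) (hQ : ∀ i, 0 ≤ Q i) (hlam : 0 ≤ lam)
    (hkkt : ∀ i, (0 < P i → deriv (f i) (P i) = lam) ∧ (P i = 0 → deriv (f i) 0 ≤ lam))
    (hQP : ∑ i, Q i ≤ ∑ i, P i) :
    ∑ i, f i (Q i) ≤ ∑ i, f i (P i) := by
  calc ∑ i, f i (Q i)
      ≤ ∑ i, (f i (P i) + lam * (Q i - P i)) :=
        Finset.sum_le_sum fun i _ => (hf i).le_add_mul_sub_of_kkt (hfd i) (hP i) (hQ i) (hkkt i)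
    _ = ∑ i, f i (P i) + lam * (∑ i, Q i - ∑ i, P i) := by
        rw [Finset.sum_add_distrib, ← Finset.mul_sum, Finset.sum_sub_distrib]
    _ ≤ ∑ i, f i (P i) := by
        linarith [mul_nonpos_of_nonneg_of_nonpos hlam (sub_nonpos.mpr hQP)]

noncomputable def secrecyRate (a b x : ℝ) : ℝ :=
  1 / 2 * log (1 + x / a) - 1 / 2 * log (1 + x / b)

lemma hasDerivAt_secrecyRate {a b x : ℝ} (ha : a ≠ 0) (hb : b ≠ 0) (hax : a + x ≠ 0)
    (hbx : b + x ≠ 0) :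
    HasDerivAt (secrecyRate a b) ((b - a) / (2 * ((a + x) * (b + x)))) x := by
  have hlog {c : ℝ} (hc : c ≠ 0) (hcx : c + x ≠ 0) :
      HasDerivAt (fun x => log (1 + x / c)) (1 / (c + x)) x := by
    have hpos : 1 + x / c ≠ 0 := by
      rw [one_add_div hc]
      exact div_ne_zero hcx hc
    have hlin : HasDerivAt (fun x => 1 + x / c) (1 / c) x := by
      simpa using ((hasDerivAt_id x).div_const c).const_add 1
    refine (hlin.log hpos).congr_deriv ?_
    field_simp
  refine (((hlog ha hax).const_mul (1 / 2)).sub ((hlog hb hbx).const_mul (1 / 2))).congr_deriv ?_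
  field_simp
  ring

lemma concaveOn_secrecyRate {a b : ℝ} (ha : 0 < a) (hab : a ≤ b) :
    ConcaveOn ℝ (Ici 0) (secrecyRate a b) := by
  have hderiv {x : ℝ} (hx : 0 ≤ x) :
      HasDerivAt (secrecyRate a b) ((b - a) / (2 * ((a + x) * (b + x)))) x :=
    hasDerivAt_secrecyRate ha.ne' (by linarith) (by linarith) (by linarith)
  refine AntitoneOn.concaveOn_of_deriv (convex_Ici 0)
    (fun x hx => (hderiv hx).continuousAt.continuousWithinAt)
    (fun x hx => (hderiv (interior_subset hx)).differentiableAt.differentiableWithinAt) ?_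
  intro x hx y hy hxy
  rw [interior_Ici, mem_Ioi] at hx hy
  rw [(hderiv hx.le).deriv, (hderiv hy.le).deriv]
  have hax : 0 < a + x := by linarith
  have hbx : 0 < b + x := by linarith
  gcongr

theorem kkt_sufficiency_general (N : ℕ) (σM σW : Fin N → ℝ)
    (hM : ∀ i, 0 < σM i) (hMW : ∀ i, σM i < σW i) (Ptot : ℝ)
    (P : Fin N → ℝ) (hP : ∀ i, 0 ≤ P i) (hsum : ∑ i, P i = Ptot)
    (lam : ℝ) (hlam : 0 < lam)
    (hkkt : ∀ i : Fin N,
      (0 < P i →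
        deriv (fun x : ℝ => (1/2) * Real.log (1 + x / σM i)
          - (1/2) * Real.log (1 + x / σW i)) (P i) = lam) ∧
      (P i = 0 →
        deriv (fun x : ℝ => (1/2) * Real.log (1 + x / σM i)
          - (1/2) * Real.log (1 + x / σW i)) 0 ≤ lam)) :
    ∀ Q : Fin N → ℝ, (∀ i, 0 ≤ Q i) → ∑ i, Q i ≤ Ptot →
      ∑ i, ((1/2) * Real.log (1 + Q i / σM i) - (1/2) * Real.log (1 + Q i / σW i)) ≤
      ∑ i, ((1/2) * Real.log (1 + P i / σM i) - (1/2) * Real.log (1 + P i / σW i)) := by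
  intro Q hQ hQsum
  have hdiff (i : Fin N) : DifferentiableAt ℝ (secrecyRate (σM i) (σW i)) (P i) := by
    have hW : 0 < σW i := (hM i).trans (hMW i)
    exact (hasDerivAt_secrecyRate (hM i).ne' hW.ne' (add_pos_of_pos_of_nonneg (hM i) (hP i)).ne'
      (add_pos_of_pos_of_nonneg hW (hP i)).ne').differentiableAt
  exact sum_le_sum_of_kkt (f := fun i => secrecyRate (σM i) (σW i))
    (fun i => concaveOn_secrecyRate (hM i) (hMW i).le) hdiff hP hQ hlam.le hkkt (hsum ▸ hQsum)

theorem kkt_sufficiency (N : ℕ) (σM σW : Fin N → ℝ)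
    (hM : ∀ i, 0 < σM i) (hMW : ∀ i, σM i < σW i) (Ptot : ℝ) (hPtot : 0 < Ptot)
    (P : Fin N → ℝ) (hP : ∀ i, 0 ≤ P i) (hsum : ∑ i, P i = Ptot)
    (lam : ℝ) (hlam : 0 < lam)
    (hkkt : ∀ i : Fin N,
      (0 < P i →
        deriv (fun x : ℝ => (1/2) * Real.log (1 + x / σM i)
          - (1/2) * Real.log (1 + x / σW i)) (P i) = lam) ∧
      (P i = 0 →
        deriv (fun x : ℝ => (1/2) * Real.log (1 + x / σM i)
          - (1/2) * Real.log (1 + x / σW i)) 0 ≤ lam)) :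
    ∀ Q : Fin N → ℝ, (∀ i, 0 ≤ Q i) → ∑ i, Q i ≤ Ptot →
      ∑ i, ((1/2) * Real.log (1 + Q i / σM i) - (1/2) * Real.log (1 + Q i / σW i)) ≤
      ∑ i, ((1/2) * Real.log (1 + P i / σM i) - (1/2) * Real.log (1 + P i / σW i)) :=
  kkt_sufficiency_general N σM σW hM hMW Ptot P hP hsum lam hlam hkkt
end
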